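/- arXiv:2209.09891 — 3 statements merged into one kernel-verified Lean document; each statement's English description precedes it below -/
import Mathlib

section
/- If σ∈S_n(321) avoids 321, then inv(σ) = crs(σ) + exc(σ), i.e., σ has no nestings. More precisely, a permutation avoids 321 if and only if it has no nesting. -/
open Finset Polynomial Equiv

attribute [local instance] Classical.propDecidable

def isCrossing {n : ℕ} (σ : Equiv.Perm (Fin n)) (i j : Fin n) : Prop :=
  (i < j ∧ j < σ i ∧ σ i < σ j) ∨ (σ i < σ j ∧ σ j ≤ i ∧ i < j)

noncomputable def crs {n : ℕ} (σ : Equiv.Perm (Fin n)) : ℕ :=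
  (Finset.univ.filter (fun p : Fin n × Fin n => isCrossing σ p.1 p.2)).card

def avoids123 {n : ℕ} (σ : Equiv.Perm (Fin n)) : Prop :=
  ¬ ∃ i j k : Fin n, i < j ∧ j < k ∧ σ i < σ j ∧ σ j < σ k

def avoids132 {n : ℕ} (σ : Equiv.Perm (Fin n)) : Prop :=
  ¬ ∃ i j k : Fin n, i < j ∧ j < k ∧ σ i < σ k ∧ σ k < σ j

def avoids213 {n : ℕ} (σ : Equiv.Perm (Fin n)) : Prop :=
  ¬ ∃ i j k : Fin n, i < j ∧ j < k ∧ σ j < σ i ∧ σ i < σ k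

def avoids231 {n : ℕ} (σ : Equiv.Perm (Fin n)) : Prop :=
  ¬ ∃ i j k : Fin n, i < j ∧ j < k ∧ σ k < σ i ∧ σ i < σ j

def avoids312 {n : ℕ} (σ : Equiv.Perm (Fin n)) : Prop :=
  ¬ ∃ i j k : Fin n, i < j ∧ j < k ∧ σ j < σ k ∧ σ k < σ i

def avoids321 {n : ℕ} (σ : Equiv.Perm (Fin n)) : Prop :=
  ¬ ∃ i j k : Fin n, i < j ∧ j < k ∧ σ k < σ j ∧ σ j < σ i

noncomputable def ut {n : ℕ} (σ : Equiv.Perm (Fin n)) : ℕ :=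
  (Finset.univ.filter (fun i : Fin n => σ⁻¹ i < i ∧ i < σ i)).card

noncomputable def lt' {n : ℕ} (σ : Equiv.Perm (Fin n)) : ℕ :=
  (Finset.univ.filter (fun i : Fin n => σ i < i ∧ i < σ⁻¹ i)).card

noncomputable def inv' {n : ℕ} (σ : Equiv.Perm (Fin n)) : ℕ :=
  (Finset.univ.filter (fun p : Fin n × Fin n => p.1 < p.2 ∧ σ p.2 < σ p.1)).card

noncomputable def exc {n : ℕ} (σ : Equiv.Perm (Fin n)) : ℕ :=
  (Finset.univ.filter (fun i : Fin n => i < σ i)).card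

def isNesting {n : ℕ} (σ : Equiv.Perm (Fin n)) (i j : Fin n) : Prop :=
  (i < j ∧ j < σ j ∧ σ j < σ i) ∨ (σ j < σ i ∧ σ i ≤ i ∧ i < j)

noncomputable def nes {n : ℕ} (σ : Equiv.Perm (Fin n)) : ℕ :=
  (Finset.univ.filter (fun p : Fin n × Fin n => isNesting σ p.1 p.2)).card


section Helpers

variable {n : ℕ}

lemma cardFlt (c : Fin n) : (univ.filter fun j : Fin n => j < c).card = (c : ℕ) := by
  have h : (univ.filter fun j : Fin n => j < c) = Finset.Iio c := by ext j; simp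
  rw [h, Fin.card_Iio]

lemma cardFle (c : Fin n) : (univ.filter fun j : Fin n => j ≤ c).card = (c : ℕ) + 1 := by
  have h : (univ.filter fun j : Fin n => j ≤ c) = Finset.Iic c := by ext j; simp
  rw [h, Fin.card_Iic]

lemma cardFgt (c : Fin n) : (univ.filter fun j : Fin n => c < j).card = n - 1 - (c : ℕ) := by
  have h : (univ.filter fun j : Fin n => c < j) = Finset.Ioi c := by ext j; simp
  rw [h, Fin.card_Ioi]

lemma cardEqOfIff {p q : Fin n → Prop} [DecidablePred p] [DecidablePred q]
    (h : ∀ a, p a ↔ q a) : (univ.filter p).card = (univ.filter q).card := by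
  congr 1
  exact Finset.filter_congr fun a _ => h a

lemma cardPerm (σ : Perm (Fin n)) (p : Fin n → Prop) [DecidablePred p]
    [DecidablePred fun j => p (σ j)] :
    (univ.filter fun j => p (σ j)).card = (univ.filter p).card := by
  apply Finset.card_bij (fun j _ => σ j)
  · intro a ha
    simp only [mem_filter, mem_univ, true_and] at ha ⊢
    exact ha
  · intro a _ b _ hab
    exact σ.injective hab
  · intro b hb
    refine ⟨σ.symm b, ?_, ?_⟩
    · simp only [mem_filter, mem_univ, true_and] at hb ⊢
      simpa using hb
    · simp

lemma prodCard (P : Fin n × Fin n → Prop) [DecidablePred P]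
    [∀ i : Fin n, DecidablePred fun j : Fin n => P (i, j)] :
    (univ.filter P).card = ∑ i : Fin n, (univ.filter fun j => P (i, j)).card := by
  rw [Finset.card_filter, Fintype.sum_prod_type]
  exact Finset.sum_congr rfl fun i _ => by rw [Finset.card_filter]

lemma prodCard' (P : Fin n × Fin n → Prop) [DecidablePred P]
    [∀ j : Fin n, DecidablePred fun i : Fin n => P (i, j)] :
    (univ.filter P).card = ∑ j : Fin n, (univ.filter fun i => P (i, j)).card := by
  rw [Finset.card_filter, Fintype.sum_prod_type_right]
  exact Finset.sum_congr rfl fun j _ => by rw [Finset.card_filter]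

lemma filterSplit (p q : Fin n → Prop) [DecidablePred p] [DecidablePred q]
    (hd : ∀ a, ¬(p a ∧ q a)) :
    (univ.filter fun a => p a ∨ q a).card = (univ.filter p).card + (univ.filter q).card := by
  have h : (univ.filter fun a => p a ∨ q a) = (univ.filter p ∪ univ.filter q) := by
    ext a
    simp only [mem_filter, mem_union, mem_univ, true_and]
  rw [h, Finset.card_union_of_disjoint]
  rw [Finset.disjoint_left]
  intro a ha hb
  rw [mem_filter] at ha hb
  exact hd a ⟨ha.2, hb.2⟩

lemma L1 (σ : Perm (Fin n)) (h : ∀ i j, ¬ isNesting σ i j) (i : Fin n) :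
    (univ.filter fun j => i < j ∧ σ j < σ i).card
      = if i < σ i then (σ i : ℕ) - (i : ℕ) else 0 := by
  by_cases hex : i < σ i
  · rw [if_pos hex]
    have hS : (univ.filter fun j => σ j < σ i).card = ((σ i : ℕ)) := by
      have h1 : (univ.filter fun j => σ j < σ i).card
          = (univ.filter fun v : Fin n => v < σ i).card := cardPerm σ (fun v => v < σ i)
      rw [h1, cardFlt]
    have hcg : (univ.filter fun j => σ j < σ i).card
        = (univ.filter fun j => (i < j ∧ σ j < σ i) ∨ j < i).card := by
      apply cardEqOfIff
      intro j
      constructor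
      · intro hj
        rcases lt_trichotomy j i with hji | rfl | hij
        · exact Or.inr hji
        · exact absurd hj (lt_irrefl _)
        · exact Or.inl ⟨hij, hj⟩
      · rintro (⟨_, h2⟩ | hji)
        · exact h2
        · by_contra hc
          push_neg at hc
          have hne : σ j ≠ σ i := σ.injective.ne (ne_of_lt hji)
          exact h j i (Or.inl ⟨hji, hex, lt_of_le_of_ne hc (Ne.symm hne)⟩)
    have hsp : (univ.filter fun j => (i < j ∧ σ j < σ i) ∨ j < i).card
        = (univ.filter fun j => i < j ∧ σ j < σ i).card
          + (univ.filter fun j : Fin n => j < i).card :=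
      filterSplit _ _ (fun a => by
        rintro ⟨⟨h1, -⟩, h2⟩; exact absurd (h1.trans h2) (lt_irrefl _))
    have hflt := cardFlt i
    omega
  · rw [if_neg hex]
    rw [Finset.card_eq_zero, Finset.filter_eq_empty_iff]
    rintro j - ⟨hij, hji⟩
    push_neg at hex
    exact h i j (Or.inr ⟨hji, hex, hij⟩)

lemma L2 (σ : Perm (Fin n)) (h : ∀ i j, ¬ isNesting σ i j) (i : Fin n) :
    (univ.filter fun j => i < j ∧ j < σ i ∧ σ i < σ j).card
      + (univ.filter fun j => i < j ∧ j < σ i ∧ σ j ≤ j).card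
      = if i < σ i then (σ i : ℕ) - (i : ℕ) - 1 else 0 := by
  by_cases hex : i < σ i
  · rw [if_pos hex]
    have hW : (univ.filter fun j : Fin n => j < σ i).card = ((σ i : ℕ)) := cardFlt _
    have hcg1 : (univ.filter fun j : Fin n => j < σ i).card
        = (univ.filter fun j => (i < j ∧ j < σ i) ∨ j ≤ i).card := by
      apply cardEqOfIff
      intro j
      constructor
      · intro hj
        rcases le_or_gt j i with hji | hij
        · exact Or.inr hji
        · exact Or.inl ⟨hij, hj⟩
      · rintro (⟨_, h2⟩ | hji)
        · exact h2
        · exact lt_of_le_of_lt hji hex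
    have hsp1 : (univ.filter fun j => (i < j ∧ j < σ i) ∨ j ≤ i).card
        = (univ.filter fun j => i < j ∧ j < σ i).card
          + (univ.filter fun j : Fin n => j ≤ i).card :=
      filterSplit _ _ (fun a => by
        rintro ⟨⟨h1, -⟩, h2⟩; exact absurd (lt_of_lt_of_le h1 h2) (lt_irrefl _))
    have hfle := cardFle i
    have hcg2 : (univ.filter fun j : Fin n => i < j ∧ j < σ i).card
        = (univ.filter fun j =>
            (i < j ∧ j < σ i ∧ σ i < σ j) ∨ (i < j ∧ j < σ i ∧ σ j ≤ j)).card := by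
      apply cardEqOfIff
      intro j
      constructor
      · rintro ⟨h1, h2⟩
        rcases lt_trichotomy (σ i) (σ j) with hv | hv | hv
        · exact Or.inl ⟨h1, h2, hv⟩
        · exact absurd (σ.injective hv) (ne_of_lt h1)
        · refine Or.inr ⟨h1, h2, ?_⟩
          by_contra hc
          push_neg at hc
          exact h i j (Or.inl ⟨h1, hc, hv⟩)
      · rintro (⟨a, b, -⟩ | ⟨a, b, -⟩) <;> exact ⟨a, b⟩
    have hsp2 : (univ.filter fun j =>
            (i < j ∧ j < σ i ∧ σ i < σ j) ∨ (i < j ∧ j < σ i ∧ σ j ≤ j)).card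
        = (univ.filter fun j => i < j ∧ j < σ i ∧ σ i < σ j).card
          + (univ.filter fun j => i < j ∧ j < σ i ∧ σ j ≤ j).card :=
      filterSplit _ _ (fun a => by
        rintro ⟨⟨-, h2, h3⟩, -, -, h6⟩
        exact absurd (h3.trans (lt_of_le_of_lt h6 h2)) (lt_irrefl _))
    omega
  · rw [if_neg hex]
    have he1 : (univ.filter fun j => i < j ∧ j < σ i ∧ σ i < σ j).card = 0 := by
      rw [Finset.card_eq_zero, Finset.filter_eq_empty_iff]
      rintro j - ⟨h1, h2, -⟩
      exact hex (h1.trans h2)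
    have he2 : (univ.filter fun j => i < j ∧ j < σ i ∧ σ j ≤ j).card = 0 := by
      rw [Finset.card_eq_zero, Finset.filter_eq_empty_iff]
      rintro j - ⟨h1, h2, -⟩
      exact hex (h1.trans h2)
    omega

lemma L3 (σ : Perm (Fin n)) (h : ∀ i j, ¬ isNesting σ i j) (j : Fin n) :
    (univ.filter fun i => i < j ∧ j < σ i ∧ σ j ≤ j).card
      = (univ.filter fun m => σ j < σ m ∧ σ m ≤ j ∧ j < m).card := by
  by_cases hd : σ j ≤ j
  · have e1 : (univ.filter fun i => i < j ∧ j < σ i ∧ σ j ≤ j).card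
        = (univ.filter fun i => i ≤ j ∧ j < σ i).card := by
      apply cardEqOfIff
      intro i
      constructor
      · rintro ⟨a, b, -⟩
        exact ⟨le_of_lt a, b⟩
      · rintro ⟨a, b⟩
        refine ⟨lt_of_le_of_ne a ?_, b, hd⟩
        rintro rfl
        exact absurd b (not_lt.2 hd)
    have e2 : (univ.filter fun m => σ j < σ m ∧ σ m ≤ j ∧ j < m).card
        = (univ.filter fun m => j < m ∧ σ m ≤ j).card := by
      apply cardEqOfIff
      intro m
      constructor
      · rintro ⟨-, b, c⟩
        exact ⟨c, b⟩
      · rintro ⟨a, b⟩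
        refine ⟨?_, b, a⟩
        rcases lt_trichotomy (σ j) (σ m) with hv | hv | hv
        · exact hv
        · exact absurd (σ.injective hv) (ne_of_lt a)
        · exact absurd (h j m (Or.inr ⟨hv, hd, a⟩)) not_false
    have hP : (univ.filter fun m => σ m ≤ j).card = (j : ℕ) + 1 := by
      have h1 : (univ.filter fun m => σ m ≤ j).card
          = (univ.filter fun v : Fin n => v ≤ j).card := cardPerm σ (fun v => v ≤ j)
      rw [h1, cardFle]
    have hQ : (univ.filter fun m : Fin n => m ≤ j).card = (j : ℕ) + 1 := cardFle _
    have hQc : (univ.filter fun m : Fin n => m ≤ j).card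
        = (univ.filter fun m => (m ≤ j ∧ σ m ≤ j) ∨ (m ≤ j ∧ j < σ m)).card := by
      apply cardEqOfIff
      intro m
      constructor
      · intro hm
        rcases le_or_gt (σ m) j with hv | hv
        · exact Or.inl ⟨hm, hv⟩
        · exact Or.inr ⟨hm, hv⟩
      · rintro (⟨a, -⟩ | ⟨a, -⟩) <;> exact a
    have hQs : (univ.filter fun m => (m ≤ j ∧ σ m ≤ j) ∨ (m ≤ j ∧ j < σ m)).card
        = (univ.filter fun m => m ≤ j ∧ σ m ≤ j).card
          + (univ.filter fun m => m ≤ j ∧ j < σ m).card :=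
      filterSplit _ _ (fun a => by
        rintro ⟨⟨-, h2⟩, -, h4⟩; exact absurd (lt_of_lt_of_le h4 h2) (lt_irrefl _))
    have hPc : (univ.filter fun m => σ m ≤ j).card
        = (univ.filter fun m => (m ≤ j ∧ σ m ≤ j) ∨ (j < m ∧ σ m ≤ j)).card := by
      apply cardEqOfIff
      intro m
      constructor
      · intro hm
        rcases le_or_gt m j with hv | hv
        · exact Or.inl ⟨hv, hm⟩
        · exact Or.inr ⟨hv, hm⟩
      · rintro (⟨-, a⟩ | ⟨-, a⟩) <;> exact a
    have hPs : (univ.filter fun m => (m ≤ j ∧ σ m ≤ j) ∨ (j < m ∧ σ m ≤ j)).card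
        = (univ.filter fun m => m ≤ j ∧ σ m ≤ j).card
          + (univ.filter fun m => j < m ∧ σ m ≤ j).card :=
      filterSplit _ _ (fun a => by
        rintro ⟨⟨h1, -⟩, h3, -⟩; exact absurd (lt_of_lt_of_le h3 h1) (lt_irrefl _))
    -- LHS-set = {m ≤ j ∧ j < σ m}
    have e3 : (univ.filter fun i => i ≤ j ∧ j < σ i).card
        = (univ.filter fun m => m ≤ j ∧ j < σ m).card := rfl
    omega
  · push_neg at hd
    have he1 : (univ.filter fun i => i < j ∧ j < σ i ∧ σ j ≤ j).card = 0 := by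
      rw [Finset.card_eq_zero, Finset.filter_eq_empty_iff]
      rintro i - ⟨-, -, hc⟩
      exact absurd hc (not_le.2 hd)
    have he2 : (univ.filter fun m => σ j < σ m ∧ σ m ≤ j ∧ j < m).card = 0 := by
      rw [Finset.card_eq_zero, Finset.filter_eq_empty_iff]
      rintro m - ⟨h1, h2, -⟩
      exact absurd (h1.trans (lt_of_le_of_lt h2 hd)) (lt_irrefl _)
    omega

lemma exists_k_big (σ : Perm (Fin n)) {i j : Fin n} (hij : i < j) (hjj : j < σ j)
    (hji : σ j < σ i) : ∃ k, j < k ∧ σ k < σ j := by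
  by_contra hc
  push_neg at hc
  have hsub : (univ.filter fun m => σ m < σ j) ⊆ (univ.filter fun m => m < j).erase i := by
    intro m hm
    rw [mem_filter] at hm
    rw [mem_erase, mem_filter]
    refine ⟨?_, mem_univ _, ?_⟩
    · rintro rfl
      exact absurd hm.2 (not_lt.2 (le_of_lt hji))
    · rcases lt_trichotomy m j with hx | rfl | hx
      · exact hx
      · exact absurd hm.2 (lt_irrefl _)
      · exact absurd hm.2 (not_lt.2 (hc m hx))
  have h1 : (univ.filter fun m => σ m < σ j).card = ((σ j : ℕ)) := by
    have e : (univ.filter fun m => σ m < σ j).card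
        = (univ.filter fun v : Fin n => v < σ j).card := cardPerm σ (fun v => v < σ j)
    rw [e, cardFlt]
  have h2 : ((univ.filter fun m : Fin n => m < j).erase i).card = (j : ℕ) - 1 := by
    rw [Finset.card_erase_of_mem, cardFlt]
    rw [mem_filter]
    exact ⟨mem_univ _, hij⟩
  have h3 := Finset.card_le_card hsub
  have h4 : (j : ℕ) < (σ j : ℕ) := hjj
  have h5 : (i : ℕ) < (j : ℕ) := hij
  omega

lemma exists_k_small (σ : Perm (Fin n)) {i j : Fin n} (hvv : σ j < σ i) (hii : σ i ≤ i)
    (hij : i < j) : ∃ k, k < i ∧ σ i < σ k := by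
  by_contra hc
  push_neg at hc
  have hsub : (univ.filter fun m => σ i < σ m) ⊆ (univ.filter fun m => i < m).erase j := by
    intro m hm
    rw [mem_filter] at hm
    rw [mem_erase, mem_filter]
    refine ⟨?_, mem_univ _, ?_⟩
    · rintro rfl
      exact absurd hm.2 (not_lt.2 (le_of_lt hvv))
    · rcases lt_trichotomy m i with hx | rfl | hx
      · exact absurd hm.2 (not_lt.2 (hc m hx))
      · exact absurd hm.2 (lt_irrefl _)
      · exact hx
  have h1 : (univ.filter fun m => σ i < σ m).card = n - 1 - ((σ i : ℕ)) := by
    have e : (univ.filter fun m => σ i < σ m).card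
        = (univ.filter fun v : Fin n => σ i < v).card := cardPerm σ (fun v => σ i < v)
    rw [e, cardFgt]
  have h2 : ((univ.filter fun m : Fin n => i < m).erase j).card = (n - 1 - (i : ℕ)) - 1 := by
    rw [Finset.card_erase_of_mem, cardFgt]
    rw [mem_filter]
    exact ⟨mem_univ _, hij⟩
  have h3 := Finset.card_le_card hsub
  have h4 : (σ i : ℕ) ≤ (i : ℕ) := hii
  have h5 : (i : ℕ) < (j : ℕ) := hij
  have h6 : (j : ℕ) < n := j.isLt
  omega

end Helpers

theorem avoids321_iff_no_nesting (n : ℕ) :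
    (∀ σ : Equiv.Perm (Fin n), avoids321 σ → inv' σ = crs σ + exc σ) ∧
      ∀ σ : Equiv.Perm (Fin n), avoids321 σ ↔ nes σ = 0 := by
  have key : ∀ σ : Equiv.Perm (Fin n), avoids321 σ → ∀ i j, ¬ isNesting σ i j := by
    intro σ hav i j hnest
    rcases hnest with ⟨hij, hjj, hji⟩ | ⟨hvv, hii, hij⟩
    · obtain ⟨k, hk1, hk2⟩ := exists_k_big σ hij hjj hji
      exact hav ⟨i, j, k, hij, hk1, hk2, hji⟩
    · obtain ⟨k, hk1, hk2⟩ := exists_k_small σ hvv hii hij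
      exact hav ⟨k, i, j, hk1, hij, hvv, hk2⟩
  constructor
  · intro σ hav
    have h := key σ hav
    have e_inv : inv' σ = ∑ i : Fin n, (univ.filter fun j => i < j ∧ σ j < σ i).card := by
      simp only [inv']
      exact prodCard (fun p : Fin n × Fin n => p.1 < p.2 ∧ σ p.2 < σ p.1)
    have per_i : ∀ i : Fin n,
        (univ.filter fun j => i < j ∧ σ j < σ i).card
          = (univ.filter fun j => i < j ∧ j < σ i ∧ σ i < σ j).card
            + (univ.filter fun j => i < j ∧ j < σ i ∧ σ j ≤ j).card
            + (if i < σ i then 1 else 0) := by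
      intro i
      have h1 := L1 σ h i
      have h2 := L2 σ h i
      by_cases hex : i < σ i
      · rw [if_pos hex] at h1 h2 ⊢
        have hlt : (i : ℕ) < ((σ i : ℕ)) := hex
        omega
      · rw [if_neg hex] at h1 h2 ⊢
        omega
    have sum_eq : ∑ i : Fin n, (univ.filter fun j => i < j ∧ σ j < σ i).card
        = (∑ i : Fin n, (univ.filter fun j => i < j ∧ j < σ i ∧ σ i < σ j).card)
          + (∑ i : Fin n, (univ.filter fun j => i < j ∧ j < σ i ∧ σ j ≤ j).card)
          + (∑ i : Fin n, if i < σ i then 1 else 0) := by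
      rw [← Finset.sum_add_distrib, ← Finset.sum_add_distrib]
      exact Finset.sum_congr rfl fun i _ => per_i i
    have swapD : ∑ i : Fin n, (univ.filter fun j => i < j ∧ j < σ i ∧ σ j ≤ j).card
        = ∑ jj : Fin n, (univ.filter fun i => i < jj ∧ jj < σ i ∧ σ jj ≤ jj).card :=
      (prodCard (fun p : Fin n × Fin n => p.1 < p.2 ∧ p.2 < σ p.1 ∧ σ p.2 ≤ p.2)).symm.trans
        (prodCard' (fun p : Fin n × Fin n => p.1 < p.2 ∧ p.2 < σ p.1 ∧ σ p.2 ≤ p.2))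
    have sumL3 : ∑ jj : Fin n, (univ.filter fun i => i < jj ∧ jj < σ i ∧ σ jj ≤ jj).card
        = ∑ jj : Fin n, (univ.filter fun m => σ jj < σ m ∧ σ m ≤ jj ∧ jj < m).card :=
      Finset.sum_congr rfl fun jj _ => L3 σ h jj
    have e_exc : exc σ = ∑ i : Fin n, (if i < σ i then 1 else 0) := by
      simp only [exc]
      exact Finset.card_filter _ _
    have e_crs : crs σ
        = (∑ i : Fin n, (univ.filter fun j => i < j ∧ j < σ i ∧ σ i < σ j).card)
          + (∑ i : Fin n, (univ.filter fun m => σ i < σ m ∧ σ m ≤ i ∧ i < m).card) := by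
      simp only [crs]
      have t1 : (univ.filter fun p : Fin n × Fin n => isCrossing σ p.1 p.2).card
          = ∑ i : Fin n, (univ.filter fun j => isCrossing σ i j).card :=
        prodCard (fun p : Fin n × Fin n => isCrossing σ p.1 p.2)
      rw [t1, ← Finset.sum_add_distrib]
      refine Finset.sum_congr rfl fun i _ => ?_
      have hc : (univ.filter fun j => isCrossing σ i j).card
          = (univ.filter fun j =>
              (i < j ∧ j < σ i ∧ σ i < σ j) ∨ (σ i < σ j ∧ σ j ≤ i ∧ i < j)).card :=
        cardEqOfIff (fun j => by rw [isCrossing])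
      rw [hc]
      exact filterSplit _ _ (fun a => by
        rintro ⟨⟨h1, h2, -⟩, h4, h5, -⟩
        exact absurd (h1.trans h2) (not_lt.2 (le_of_lt (lt_of_lt_of_le h4 h5))))
    omega
  · intro σ
    constructor
    · intro hav
      simp only [nes, Finset.card_eq_zero, Finset.filter_eq_empty_iff]
      intro p _
      exact key σ hav p.1 p.2
    · intro hz hpat
      obtain ⟨i, j, k, hij, hjk, h1, h2⟩ := hpat
      have hnz : ∃ p : Fin n × Fin n, isNesting σ p.1 p.2 := by
        by_cases hc : j < σ j
        · exact ⟨(i, j), Or.inl ⟨hij, hc, h2⟩⟩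
        · push_neg at hc
          exact ⟨(j, k), Or.inr ⟨h1, hc, hjk⟩⟩
      obtain ⟨p, hp⟩ := hnz
      have hmem : p ∈ Finset.univ.filter (fun p : Fin n × Fin n => isNesting σ p.1 p.2) :=
        Finset.mem_filter.2 ⟨Finset.mem_univ _, hp⟩
      simp only [nes, Finset.card_eq_zero] at hz
      rw [hz] at hmem
      exact absurd hmem (Finset.notMem_empty _)
end

section
/- Every permutation of [n] avoiding both 312 and 231 has no crossings: if σ∈S_n(312,231) then crs(σ) = 0. -/
open Finset Polynomial Equiv

attribute [local instance] Classical.propDecidable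

/-!
A crossing `i < j < σ i < σ j` sends `i ∈ Iic j` out of `Iic j`, so, `σ` being a bijection of a
finite set, some `q > j` is sent back into `Iic j`; then `i, j, q` is an occurrence of `231`.
Symmetrically, a crossing `σ i < σ j ≤ i < j` sends `j ∉ Iic i` into `Iic i`, so some `p ≤ i`
(necessarily `p < i`) leaves `Iic i`, and `p, i, j` is an occurrence of `312`.
-/

theorem Equiv.Perm.exists_notMem_apply_mem {α : Type*} [Finite α] (σ : Perm α) {s : Set α}
    {x : α} (hx : x ∈ s) (hσx : σ x ∉ s) : ∃ y ∉ s, σ y ∈ s := by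
  by_contra! h
  have hbij : Set.BijOn σ sᶜ sᶜ :=
    ((Set.toFinite sᶜ).injOn_iff_bijOn_of_mapsTo h).mp σ.injective.injOn
  have hs : Set.MapsTo σ s s := by simpa using hbij.surjOn.mapsTo_compl σ.injective
  exact hσx (hs hx)

theorem Equiv.Perm.exists_mem_apply_notMem {α : Type*} [Finite α] (σ : Perm α) {s : Set α}
    {x : α} (hx : x ∉ s) (hσx : σ x ∈ s) : ∃ y ∈ s, σ y ∉ s := by
  simpa using σ.exists_notMem_apply_mem (s := sᶜ) hx (by simpa using hσx)

theorem not_avoids231_of_lt_of_lt_of_lt {n : ℕ} {σ : Perm (Fin n)} {i j : Fin n}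
    (hij : i < j) (hj : j < σ i) (hσ : σ i < σ j) : ¬ avoids231 σ := by
  obtain ⟨q, hjq, hq⟩ := σ.exists_notMem_apply_mem (s := Set.Iic j) hij.le hj.not_ge
  simp only [Set.mem_Iic, not_le] at hjq hq
  exact not_not.mpr ⟨i, j, q, hij, hjq, hq.trans_lt hj, hσ⟩

theorem not_avoids312_of_lt_of_le_of_lt {n : ℕ} {σ : Perm (Fin n)} {i j : Fin n}
    (hσ : σ i < σ j) (hj : σ j ≤ i) (hij : i < j) : ¬ avoids312 σ := by
  obtain ⟨p, hpi, hp⟩ := σ.exists_mem_apply_notMem (s := Set.Iic i) hij.not_ge hj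
  simp only [Set.mem_Iic, not_le] at hpi hp
  have hpi' : p < i := hpi.lt_of_ne (by rintro rfl; exact (hσ.trans_le hj).not_gt hp)
  exact not_not.mpr ⟨p, i, j, hpi', hij, hσ, hj.trans_lt hp⟩

theorem crs_zero_of_312_231 (n : ℕ) (σ : Equiv.Perm (Fin n))
    (h1 : avoids312 σ) (h2 : avoids231 σ) : crs σ = 0 := by
  rw [crs, Finset.card_eq_zero, Finset.filter_eq_empty_iff]
  rintro ⟨i, j⟩ - (⟨hij, hj, hσ⟩ | ⟨hσ, hj, hij⟩)
  · exact not_avoids231_of_lt_of_lt_of_lt hij hj hσ h2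
  · exact not_avoids312_of_lt_of_le_of_lt hσ hj hij h1
end

section
/- For every n ≥ 2, the crossing-number distribution over permutations of [n] with σ(2)=1 satisfies ∑_{σ∈S_n, σ(2)=1} q^{crs(σ)} = q·∑_{σ∈S_{n−1}} q^{crs(σ)} + (1−q)·∑_{σ∈S_{n−2}} q^{crs(σ)}. -/
open Finset Polynomial Equiv

attribute [local instance] Classical.propDecidable

/-!
Deleting position 2 and value 1 from a permutation σ of [n] with σ(2) = 1 gives a permutation
τ of [n-1], and every τ arises once. Crossings of σ avoiding position 2 are exactly the
crossings of τ; position 2 lies in at most one crossing, namely (2, σ⁻¹(2)), and it does so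
iff σ⁻¹(2) > 2, i.e. iff τ(1) ≠ 1. Hence the sum is ∑_τ q^{crs τ}, weighted by an extra q
except on the τ fixing 1, and those are the permutations of [n-2] with unchanged crossing
numbers. Positions and values are 0-based below, so the paper's 1 and 2 are `0` and `1`.
-/

namespace Crossing

variable {n : ℕ}

lemma crs_eq_crs_add_card_isCrossing_at (σ : Perm (Fin (n + 1))) (τ : Perm (Fin n))
    (p : Fin (n + 1))
    (h : ∀ i j, isCrossing σ (p.succAbove i) (p.succAbove j) ↔ isCrossing τ i j) :
    crs σ = crs τ +
      #{q : Fin (n + 1) × Fin (n + 1) | isCrossing σ q.1 q.2 ∧ (q.1 = p ∨ q.2 = p)} := by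
  have away : #{q : Fin (n + 1) × Fin (n + 1) | isCrossing σ q.1 q.2 ∧ ¬(q.1 = p ∨ q.2 = p)}
      = crs τ := by
    symm
    refine card_nbij (Prod.map p.succAbove p.succAbove) ?_ ?_ ?_
    · rintro ⟨i, j⟩ hij
      simp only [coe_filter, Set.mem_ofPred_eq, mem_univ, true_and, Prod.map] at hij ⊢
      exact ⟨(h i j).2 hij, by simp [Fin.succAbove_ne]⟩
    · exact (Fin.succAbove_right_injective.prodMap Fin.succAbove_right_injective).injOn
    · rintro ⟨x, y⟩ hxy
      simp only [coe_filter, Set.mem_ofPred_eq, mem_univ, true_and, not_or] at hxy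
      obtain ⟨hc, hx, hy⟩ := hxy
      obtain ⟨i, rfl⟩ := Fin.exists_succAbove_eq hx
      obtain ⟨j, rfl⟩ := Fin.exists_succAbove_eq hy
      exact ⟨(i, j), by simpa [h] using hc, rfl⟩
  rw [← away, crs, ← card_filter_add_card_filter_not (fun q => q.1 = p ∨ q.2 = p),
    filter_filter, filter_filter]
  exact Nat.add_comm _ _

lemma card_isCrossing_at_zero {σ : Perm (Fin (n + 1))} (h : σ 0 = 0) :
    #{q : Fin (n + 1) × Fin (n + 1) | isCrossing σ q.1 q.2 ∧ (q.1 = 0 ∨ q.2 = 0)} = 0 := by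
  refine card_eq_zero.2 (filter_eq_empty_iff.2 ?_)
  rintro ⟨i, j⟩ - ⟨hc, rfl | rfl⟩ <;>
    simp only [isCrossing, h, Fin.lt_def, Fin.le_def, Fin.val_zero] at hc <;> omega

lemma isCrossing_and_at_one_iff {σ : Perm (Fin (n + 2))} (h : σ 1 = 0) (i j : Fin (n + 2)) :
    isCrossing σ i j ∧ (i = 1 ∨ j = 1) ↔ i = 1 ∧ j = σ⁻¹ 1 ∧ 1 < j := by
  rw [Perm.eq_inv_iff_eq]
  constructor
  · rintro ⟨hc, rfl | rfl⟩
    · simp only [isCrossing, h, Fin.ext_iff, Fin.lt_def, Fin.le_def, Fin.val_zero, Fin.val_one,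
        true_and] at hc ⊢
      omega
    · simp only [isCrossing, h, Fin.lt_def, Fin.le_def, Fin.val_zero] at hc
      omega
  · rintro ⟨rfl, hj, h1j⟩
    refine ⟨Or.inr ⟨?_, hj.le, h1j⟩, Or.inl rfl⟩
    rw [h, hj]
    exact Fin.zero_lt_one

lemma card_isCrossing_at_one {σ : Perm (Fin (n + 2))} (h : σ 1 = 0) :
    #{q : Fin (n + 2) × Fin (n + 2) | isCrossing σ q.1 q.2 ∧ (q.1 = 1 ∨ q.2 = 1)} =
      if 1 < σ⁻¹ 1 then 1 else 0 := by
  have crossings_at_one :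
      ({q | isCrossing σ q.1 q.2 ∧ (q.1 = 1 ∨ q.2 = 1)} : Finset (Fin (n + 2) × Fin (n + 2))) =
        ({(1, σ⁻¹ 1)} : Finset _).filter (fun q => 1 < q.2) := by
    ext ⟨i, j⟩
    simp only [mem_filter, mem_univ, true_and, mem_singleton, isCrossing_and_at_one_iff h,
      Prod.mk.injEq, and_assoc]
  rw [crossings_at_one, filter_singleton, apply_ite card, card_singleton, card_empty]

lemma crs_decomposeFin_symm_zero (τ : Perm (Fin n)) :
    crs (Perm.decomposeFin.symm (0, τ)) = crs τ := by
  refine (crs_eq_crs_add_card_isCrossing_at _ τ 0 fun i j => ?_).trans ?_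
  · simp only [isCrossing, Fin.succAbove_zero, Perm.decomposeFin_symm_apply_succ, swap_self,
      refl_apply, Fin.succ_lt_succ_iff, Fin.succ_le_succ_iff]
  · rw [card_isCrossing_at_zero (Perm.decomposeFin_symm_apply_zero 0 τ), add_zero]

def insertZeroAtOne (τ : Perm (Fin (n + 1))) : Perm (Fin (n + 2)) :=
  Perm.decomposeFin.symm (0, τ) * swap 0 1

lemma insertZeroAtOne_apply_one (τ : Perm (Fin (n + 1))) : insertZeroAtOne τ 1 = 0 := by
  rw [insertZeroAtOne, Perm.mul_apply, swap_apply_right, Perm.decomposeFin_symm_apply_zero]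

lemma insertZeroAtOne_apply_succAbove (τ : Perm (Fin (n + 1))) (k : Fin (n + 1)) :
    insertZeroAtOne τ ((1 : Fin (n + 2)).succAbove k) = (τ k).succ := by
  cases k using Fin.cases with
  | zero =>
    rw [Fin.one_succAbove_zero, insertZeroAtOne, Perm.mul_apply, swap_apply_left,
      ← Fin.succ_zero_eq_one, Perm.decomposeFin_symm_apply_succ, swap_self, refl_apply]
  | succ k =>
    rw [Fin.one_succAbove_succ, insertZeroAtOne, Perm.mul_apply,
      swap_apply_of_ne_of_ne (Fin.succ_ne_zero _) (by simp [Fin.ext_iff]),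
      Perm.decomposeFin_symm_apply_succ, swap_self, refl_apply]

lemma isCrossing_insertZeroAtOne_succAbove (τ : Perm (Fin (n + 1))) (i j : Fin (n + 1)) :
    isCrossing (insertZeroAtOne τ) ((1 : Fin (n + 2)).succAbove i)
      ((1 : Fin (n + 2)).succAbove j) ↔ isCrossing τ i j := by
  -- Positions move by `succAbove 1` and values by `succ`; the two shifts differ only at
  -- position `0`, where the position-value comparison fails on both sides.
  simp only [isCrossing, insertZeroAtOne_apply_succAbove, Fin.succ_lt_succ_iff,
    Fin.succAbove_lt_succAbove_iff]
  cases i using Fin.cases <;> cases j using Fin.cases <;>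
    simp only [Fin.one_succAbove_zero, Fin.one_succAbove_succ, Fin.lt_def, Fin.le_def,
      Fin.val_succ, Fin.val_zero] <;> omega

lemma crs_insertZeroAtOne (τ : Perm (Fin (n + 1))) :
    crs (insertZeroAtOne τ) = crs τ + if τ 0 = 0 then 0 else 1 := by
  have hinv : (insertZeroAtOne τ)⁻¹ 1 = (1 : Fin (n + 2)).succAbove (τ⁻¹ 0) := by
    rw [Perm.inv_eq_iff_eq, insertZeroAtOne_apply_succAbove, ← Perm.mul_apply, mul_inv_cancel,
      Perm.one_apply, Fin.succ_zero_eq_one]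
  have one_lt_iff : 1 < (1 : Fin (n + 2)).succAbove (τ⁻¹ 0) ↔ ¬τ 0 = 0 := by
    rw [Fin.lt_succAbove_iff_le_castSucc, eq_comm, ← Perm.inv_eq_iff_eq]
    simp only [Fin.le_def, Fin.val_castSucc, Fin.val_one, Fin.ext_iff, Fin.val_zero]
    omega
  rw [crs_eq_crs_add_card_isCrossing_at _ τ 1 (isCrossing_insertZeroAtOne_succAbove τ),
    card_isCrossing_at_one (insertZeroAtOne_apply_one τ), hinv]
  simp only [one_lt_iff, ite_not]

variable {M : Type*} [AddCommMonoid M]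

lemma sum_filter_apply_zero_eq_zero (f : Perm (Fin (n + 1)) → M) :
    ∑ σ with σ 0 = 0, f σ = ∑ τ : Perm (Fin n), f (Perm.decomposeFin.symm (0, τ)) := by
  rw [sum_filter, ← Perm.decomposeFin.symm.sum_comp, Fintype.sum_prod_type_right]
  simp only [Perm.decomposeFin_symm_apply_zero, sum_ite_eq', mem_univ, if_true]

lemma sum_filter_apply_one_eq_zero (f : Perm (Fin (n + 2)) → M) :
    ∑ σ with σ 1 = 0, f σ = ∑ τ : Perm (Fin (n + 1)), f (insertZeroAtOne τ) := by
  simp only [insertZeroAtOne]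
  rw [← sum_filter_apply_zero_eq_zero fun σ => f (σ * swap 0 1)]
  refine sum_equiv (Equiv.mulRight (swap 0 1)) (fun σ => ?_) (fun σ _ => ?_)
  · simp only [mem_filter, mem_univ, true_and, coe_mulRight, Perm.mul_apply, swap_apply_left]
  · simp only [coe_mulRight, mul_assoc, swap_mul_self, mul_one]

end Crossing

open Crossing in
theorem sum_second_position_one (n : ℕ) (hn : 2 ≤ n) :
    ∑ σ ∈ Finset.univ.filter
        (fun σ : Equiv.Perm (Fin n) => σ (⟨1, by omega⟩ : Fin n) = (⟨0, by omega⟩ : Fin n)),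
        (Polynomial.X : Polynomial ℤ) ^ crs σ =
      Polynomial.X * (∑ σ : Equiv.Perm (Fin (n - 1)), (Polynomial.X : Polynomial ℤ) ^ crs σ) +
        (1 - Polynomial.X) *
          ∑ σ : Equiv.Perm (Fin (n - 2)), (Polynomial.X : Polynomial ℤ) ^ crs σ := by
  obtain ⟨m, rfl⟩ : ∃ m, n = m + 2 := ⟨n - 2, by omega⟩
  simp only [Fin.mk_one, Fin.zero_eta]
  show ∑ σ : Perm (Fin (m + 2)) with σ 1 = 0, (X : ℤ[X]) ^ crs σ =
    X * ∑ τ : Perm (Fin (m + 1)), X ^ crs τ + (1 - X) * ∑ ρ : Perm (Fin m), X ^ crs ρ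
  have fixing_zero : ∑ τ : Perm (Fin (m + 1)) with τ 0 = 0, (X : ℤ[X]) ^ crs τ =
      ∑ ρ : Perm (Fin m), X ^ crs ρ := by
    simp only [sum_filter_apply_zero_eq_zero, crs_decomposeFin_symm_zero]
  rw [sum_filter_apply_one_eq_zero, ← fixing_zero, sum_filter, mul_sum, mul_sum,
    ← sum_add_distrib]
  refine sum_congr rfl fun τ _ => ?_
  rw [crs_insertZeroAtOne]
  split_ifs <;> ring
end
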